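/- Let A be a unital C*-algebra with a state φ, let r ≥ 2, p ≠ q in [r], let v ∈ A be unitary and w ∈ A. In M_r(A) set θ = v⊗e(p,q) and χ = w⊗e(q,q). Then: (1) θ is a partial isometry with θθ* = 1⊗e(p,p) and θ*θ = 1⊗e(q,q); (2) Φ_q(χ^k) = φ(w^k) for all k ≥ 1; in particular, if w is positive with the quarter-circular distribution with respect to φ, then χ is positive and has the quarter-circular distribution with respect to Φ_q; (3) θ and χ are *-monotone independent with respect to Φ_q in the following sense: for every n ≥ 2, all a₁,…,a_n in the linear span of {v⊗e(p,q), v*⊗e(q,p), 1⊗e(q,q), 1⊗e(p,p)} and all b₁,…,b_{n−1} each of the form P(w)⊗e(q,q) with P a polynomial, one has Φ_q(a₁b₁a₂b₂⋯b_{n−1}a_n) = Φ_q(a₁)·Φ_q(a₂)⋯Φ_q(a_n)·Φ_q(b₁b₂⋯b_{n−1}). -/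

import Mathlib

open scoped ComplexOrder

noncomputable section

/-- The `k`-th moment of the quarter-circular distribution:
`(1/π)·∫₀² t^k √(4−t²) dt`. -/
def qcMoment (k : ℕ) : ℝ :=
  (1 / Real.pi) * ∫ t in (0:ℝ)..2, t ^ k * Real.sqrt (4 - t ^ 2)

/-! Matrix units multiply as `e(i,j) e(j,k) = e(i,k)`, so (1) and (2) are computations in the
corner `e(q,q) M_r(A) e(q,q) ≅ A`. For (3), the `(q,q)` entry of `a₀ χ₀ a₁ ⋯ χ_{m-1} a_m` with
`χ_k = c_k ⊗ e(q,q)` is `a₀(q,q) c₀ a₁(q,q) ⋯ c_{m-1} a_m(q,q)`; on the span of the four matrix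
units (as `p ≠ q`) each `a_k(q,q)` is the scalar `Φ_q(a_k)` times `1`, and scalars pull out of the
product. -/

theorem List.prod_ofFn_smul {R A : Type*} [CommMonoid R] [Monoid A] [MulAction R A]
    [IsScalarTower R A A] [SMulCommClass R A A] {m : ℕ} (d : Fin m → R) (c : Fin m → A) :
    (List.ofFn fun k => d k • c k).prod = (∏ k, d k) • (List.ofFn c).prod := by
  induction m with
  | zero => simp
  | succ m ih =>
    rw [List.ofFn_succ, List.prod_cons, ih, List.ofFn_succ, List.prod_cons, Fin.prod_univ_succ,
      smul_mul_smul_comm]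

namespace Matrix

variable {n α : Type*} [DecidableEq n]

theorem star_single [AddMonoid α] [StarAddMonoid α] (i j : n) (a : α) :
    star (single i j a) = single j i (star a) := by
  rw [star_eq_conjTranspose, conjTranspose_single]

theorem single_pow_apply_same [Fintype n] [Semiring α] (i : n) (a : α) (k : ℕ) :
    (single i i a ^ k) i i = a ^ k := by
  induction k with
  | zero => simp
  | succ k ih => rw [pow_succ, mul_single_apply_same, ih, pow_succ]

theorem prod_ofFn_single_apply_same [Fintype n] [Semiring α] (i : n) {m : ℕ} (c : Fin m → α) :
    (List.ofFn fun k => single i i (c k)).prod i i = (List.ofFn c).prod := by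
  induction m with
  | zero => simp
  | succ m ih =>
    rw [List.ofFn_succ, List.prod_cons, single_mul_apply_same, ih, List.ofFn_succ, List.prod_cons]

theorem mul_single_mul_apply_same [Fintype n] [NonUnitalSemiring α] (M N : Matrix n n α) (i : n)
    (c : α) :
    (M * single i i c * N) i i = M i i * c * N i i := by
  rw [mul_apply, Finset.sum_eq_single i]
  · rw [mul_single_apply_same]
  · intro j _ hj
    rw [mul_single_apply_of_ne _ _ _ _ _ hj, zero_mul]
  · simp

theorem prod_ofFn_mul_single_mul_apply_same [Fintype n] [Semiring α] (i : n) {m : ℕ}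
    (a : Fin (m + 1) → Matrix n n α) (c : Fin m → α) :
    ((List.ofFn fun k : Fin m => a k.castSucc * single i i (c k)).prod * a (Fin.last m)) i i
      = (List.ofFn fun k : Fin m => a k.castSucc i i * c k).prod * a (Fin.last m) i i := by
  induction m with
  | zero => simp
  | succ m ih =>
    rw [List.ofFn_succ', List.prod_concat, ← mul_assoc, mul_single_mul_apply_same,
      ih (fun k => a k.castSucc) (fun k => c k.castSucc),
      List.ofFn_succ', List.prod_concat, ← mul_assoc]

theorem apply_same_mem_span_one_of_mem_span {R : Type*} [CommSemiring R] [Semiring α]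
    [Module R α] {p q : n} (hpq : p ≠ q) (x y : α) {M : Matrix n n α}
    (hM : M ∈ Submodule.span R
      ({single p q x, single q p y, single q q 1, single p p 1} : Set (Matrix n n α))) :
    M q q ∈ R ∙ (1 : α) := by
  suffices h : Submodule.span R
      ({single p q x, single q p y, single q q 1, single p p 1} : Set (Matrix n n α))
      ≤ (R ∙ (1 : α)).comap (entryLinearMap R α q q) from h hM
  rw [Submodule.span_le]
  rintro N (rfl | rfl | rfl | rfl) <;>
    simp [hpq, Submodule.mem_span_singleton_self]

end Matrix

theorem partialIsometry_quarterCircular_monotone_general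
    (A : Type*) [NormedRing A] [StarRing A] [NormedAlgebra ℂ A]
    (φ : A →ₗ[ℂ] ℂ) (hφ1 : φ 1 = 1)
    (r : ℕ) (p q : Fin r) (hpq : p ≠ q)
    (v w : A) (hv : star v * v = 1 ∧ v * star v = 1) :
    -- (1) partial isometry
    ((Matrix.single p q v) * star (Matrix.single p q v)
        = Matrix.single p p (1 : A) ∧
      star (Matrix.single p q v) * (Matrix.single p q v)
        = Matrix.single q q (1 : A)) ∧
    -- (2) moments of χ
    ((∀ k : ℕ, 1 ≤ k →
        φ (((Matrix.single q q w) ^ k) q q) = φ (w ^ k)) ∧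
      ((∃ y : A, w = star y * y) → (∀ k : ℕ, φ (w ^ k) = (qcMoment k : ℂ)) →
        (∃ Y : Matrix (Fin r) (Fin r) A, Matrix.single q q w = star Y * Y) ∧
        (∀ k : ℕ, 1 ≤ k →
          φ (((Matrix.single q q w) ^ k) q q) = (qcMoment k : ℂ)))) ∧
    -- (3) *-monotone independence of θ and χ
    (∀ (m : ℕ), 1 ≤ m →
      ∀ (a : Fin (m + 1) → Matrix (Fin r) (Fin r) A)
        (b : Fin m → Matrix (Fin r) (Fin r) A),
      (∀ i, a i ∈ Submodule.span ℂ
        ({Matrix.single p q v, Matrix.single q p (star v),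
          Matrix.single q q (1 : A), Matrix.single p p (1 : A)} :
          Set (Matrix (Fin r) (Fin r) A))) →
      (∀ i, ∃ P : Polynomial ℂ, b i = Matrix.single q q (Polynomial.aeval w P)) →
      φ ((((List.ofFn fun i : Fin m => a i.castSucc * b i).prod) * a (Fin.last m)) q q)
        = (∏ i, φ ((a i) q q)) * φ (((List.ofFn fun i => b i).prod) q q)) := by
  refine ⟨⟨?_, ?_⟩, ⟨fun k _ => by rw [Matrix.single_pow_apply_same], ?_⟩, ?_⟩
  · rw [Matrix.star_single, Matrix.single_mul_single_same, hv.2]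
  · rw [Matrix.star_single, Matrix.single_mul_single_same, hv.1]
  · rintro ⟨y, rfl⟩ hqc
    refine ⟨⟨Matrix.single q q y, by rw [Matrix.star_single, Matrix.single_mul_single_same]⟩,
      fun k _ => ?_⟩
    rw [Matrix.single_pow_apply_same, hqc]
  · intro m _ a b ha hb
    choose P hP using hb
    obtain rfl := funext hP
    choose d hd using fun i =>
      Submodule.mem_span_singleton.1 (Matrix.apply_same_mem_span_one_of_mem_span hpq _ _ (ha i))
    simp only [Matrix.prod_ofFn_mul_single_mul_apply_same, Matrix.prod_ofFn_single_apply_same,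
      ← hd, smul_one_mul, mul_smul_one, List.prod_ofFn_smul, smul_smul, map_smul, hφ1,
      smul_eq_mul, mul_one]
    rw [Fin.prod_univ_castSucc, mul_comm (d _)]

/-- for a unitary `v` and `w ∈ A`, with `θ = v⊗e(p,q)`, `χ = w⊗e(q,q)` in
`M_r(A)`: (1) `θ` is a partial isometry with `θθ* = 1⊗e(p,p)`, `θ*θ = 1⊗e(q,q)`;
(2) `Φ_q(χ^k) = φ(w^k)`, and if `w` is positive quarter-circular then so is `χ` w.r.t. `Φ_q`;
(3) `θ` and `χ` are *-monotone independent with respect to `Φ_q`. -/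
theorem partialIsometry_quarterCircular_monotone
    (A : Type*) [NormedRing A] [StarRing A] [CStarRing A] [NormedAlgebra ℂ A]
    [CompleteSpace A] [StarModule ℂ A]
    (φ : A →ₗ[ℂ] ℂ) (hφ1 : φ 1 = 1) (hφpos : ∀ a : A, 0 ≤ φ (star a * a))
    (r : ℕ) (hr : 2 ≤ r) (p q : Fin r) (hpq : p ≠ q)
    (v w : A) (hv : star v * v = 1 ∧ v * star v = 1) :
    -- (1) partial isometry
    ((Matrix.single p q v) * star (Matrix.single p q v)
        = Matrix.single p p (1 : A) ∧
      star (Matrix.single p q v) * (Matrix.single p q v)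
        = Matrix.single q q (1 : A)) ∧
    -- (2) moments of χ
    ((∀ k : ℕ, 1 ≤ k →
        φ (((Matrix.single q q w) ^ k) q q) = φ (w ^ k)) ∧
      ((∃ y : A, w = star y * y) → (∀ k : ℕ, φ (w ^ k) = (qcMoment k : ℂ)) →
        (∃ Y : Matrix (Fin r) (Fin r) A, Matrix.single q q w = star Y * Y) ∧
        (∀ k : ℕ, 1 ≤ k →
          φ (((Matrix.single q q w) ^ k) q q) = (qcMoment k : ℂ)))) ∧
    -- (3) *-monotone independence of θ and χ
    (∀ (m : ℕ), 1 ≤ m →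
      ∀ (a : Fin (m + 1) → Matrix (Fin r) (Fin r) A)
        (b : Fin m → Matrix (Fin r) (Fin r) A),
      (∀ i, a i ∈ Submodule.span ℂ
        ({Matrix.single p q v, Matrix.single q p (star v),
          Matrix.single q q (1 : A), Matrix.single p p (1 : A)} :
          Set (Matrix (Fin r) (Fin r) A))) →
      (∀ i, ∃ P : Polynomial ℂ, b i = Matrix.single q q (Polynomial.aeval w P)) →
      φ ((((List.ofFn fun i : Fin m => a i.castSucc * b i).prod) * a (Fin.last m)) q q)
        = (∏ i, φ ((a i) q q)) * φ (((List.ofFn fun i => b i).prod) q q)) :=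
  partialIsometry_quarterCircular_monotone_general A φ hφ1 r p q hpq v w hv

end
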